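/- Let C = RM_q(s−1,d), let (C,α,x) be an elusive triple, and let π be a (C,α,x)-associate. Then: (i) if q ≡ 0 (mod 3), there are at most two (C,α,x)-associates π' with MC(π,π') = 3; (ii) if q ≡ 1 (mod 3), there are at most four (C,α,x)-associates π' with MC(π,π') = 3; (iii) if q ≡ 2 (mod 3), there are no (C,α,x)-associates π' with MC(π,π') = 3. -/

import Mathlib

/-!
Translate everything by `-α`. Every vertex of `x(C)` has entry sum `0`: otherwise one entry
change would produce a sum-zero vertex of `C₁`, which is impossible. Hence `π = α + D` and
`π' = α + D'` for dipoles `D, D'` with `d(D, D') ≥ 3`, and the two mutual codewords other than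
`α` give two distinct affine relations `δ₁, δ₂` among the points of `F^d`, each at distance `2`
from both `D` and `D'`. Counting disagreements, each `δᵢ` lives on `supp D ∪ supp D'`; if the
supports were disjoint, both `δᵢ` would equal `D + D'`. So the supports share one point, both
`δᵢ` live on three collinear points `u, v, w = v + m • (u - v)`, hence are multiples of
`(-m, m - 1, 1)`, and the agreement conditions force `m ^ 2 - m + 1 = 0` and determine `D'` up to
two choices. This polynomial has at most two roots, only `-1` in characteristic `3`, and none
when `q ≡ 2 (mod 3)`, since `-m` would be a primitive cube root of unity.
-/

variable {M Q : Type*}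

/-- The set of entries in which two vertices of the Hamming graph differ. -/
def diffSet [Fintype M] [DecidableEq Q] (α β : M → Q) : Finset M :=
  Finset.univ.filter fun i => α i ≠ β i

/-- `GammaSet α r` is the set of vertices at Hamming distance exactly `r` from `α`. -/
def GammaSet [Fintype M] [DecidableEq Q] (α : M → Q) (r : ℕ) : Set (M → Q) :=
  {β | hammingDist α β = r}

/-- The neighbour set `C₁` of a code `C`. -/
def neighbourSet [Fintype M] [DecidableEq Q] (C : Set (M → Q)) : Set (M → Q) :=
  {ν | ν ∉ C ∧ ∃ c ∈ C, hammingDist ν c = 1}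

/-- An automorphism of the Hamming graph: a bijection of vertices preserving Hamming distance. -/
def IsAut [Fintype M] [DecidableEq Q] (x : (M → Q) ≃ (M → Q)) : Prop :=
  ∀ a b, hammingDist (x a) (x b) = hammingDist a b

/-- An elusive triple `(C, α, x)`. -/
def IsElusiveTriple [Fintype M] [DecidableEq Q] (C : Set (M → Q)) (α : M → Q)
    (x : (M → Q) ≃ (M → Q)) : Prop :=
  IsAut x ∧ x '' neighbourSet C = neighbourSet C ∧ α ∈ C ∧ x α ∉ C

/-- A `(C,α,x)`-associate: a vertex in `Γ₂(α) ∩ C^x`. -/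
def IsAssociate [Fintype M] [DecidableEq Q] (C : Set (M → Q)) (α : M → Q)
    (x : (M → Q) ≃ (M → Q)) (π : M → Q) : Prop :=
  π ∈ GammaSet α 2 ∧ π ∈ x '' C

/-- `MC C π π' = |C ∩ Γ₂(π) ∩ Γ₂(π')|`, the number of mutual codewords. -/
noncomputable def MC [Fintype M] [DecidableEq Q] (C : Set (M → Q)) (π π' : M → Q) : ℕ :=
  (C ∩ GammaSet π 2 ∩ GammaSet π' 2).ncard

/-- The code `C` has minimum distance `δ`. -/
def HasMinDist [Fintype M] [DecidableEq Q] (C : Set (M → Q)) (δ : ℕ) : Prop :=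
  IsLeast {d : ℕ | ∃ a ∈ C, ∃ b ∈ C, a ≠ b ∧ hammingDist a b = d} δ

/-- `IsCodeDist C β k` says that `d(β, C) = k`. -/
def IsCodeDist [Fintype M] [DecidableEq Q] (C : Set (M → Q)) (β : M → Q) (k : ℕ) : Prop :=
  IsLeast {d : ℕ | ∃ γ ∈ C, hammingDist β γ = d} k

/-- `update2 α i j a b` is the vertex `γ(α|i,j|a,b)`. -/
def update2 [DecidableEq M] (α : M → Q) (i j : M) (a b : Q) : M → Q :=
  Function.update (Function.update α i a) j b

/-- `update3 α i j k a b c` is the vertex `γ(α|i,j,k|a,b,c)`. -/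
def update3 [DecidableEq M] (α : M → Q) (i j k : M) (a b c : Q) : M → Q :=
  Function.update (Function.update (Function.update α i a) j b) k c

/-- The Reed–Muller code `RM_q(s,d)` (with `s = (q-1)d - 1`): the dual of the repetition
code, i.e. all vertices of `H(q^d, q)` whose entries sum to zero. -/
def RMs (F : Type*) [Field F] [Fintype F] (d : ℕ) : Set ((Fin d → F) → F) :=
  {α | ∑ v : Fin d → F, α v = 0}

/-- The Reed–Muller code `RM_q(s-1,d)` (with `s = (q-1)d - 1`): the members `α` of
`RM_q(s,d)` which additionally satisfy `∑_{v ∈ M} α_v • v = 0`. -/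
def RMs1 (F : Type*) [Field F] [Fintype F] (d : ℕ) : Set ((Fin d → F) → F) :=
  {α | ∑ v : Fin d → F, α v = 0 ∧ ∑ v : Fin d → F, α v • v = 0}

open Finset

section Hamming

variable {ι β : Type*} [Fintype ι] [DecidableEq ι] [DecidableEq β] {f g h : ι → β}

theorem hammingDist_le_two_of_eq {x y : ι} (hfg : ∀ i, i ≠ x → i ≠ y → f i = g i) :
    hammingDist f g ≤ 2 := by
  calc hammingDist f g ≤ #{x, y} := card_le_card fun i hi => by
        by_contra hxy
        simp only [mem_insert, mem_singleton, not_or] at hxy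
        exact (mem_filter.mp hi).2 (hfg i hxy.1 hxy.2)
    _ ≤ 2 := card_le_two

theorem three_le_hammingDist {i j k : ι} (hij : i ≠ j) (hik : i ≠ k) (hjk : j ≠ k)
    (hi : f i ≠ g i) (hj : f j ≠ g j) (hk : f k ≠ g k) : 3 ≤ hammingDist f g := by
  calc 3 = #{i, j, k} := by simp [hij, hik, hjk]
    _ ≤ hammingDist f g := card_le_card fun l hl => by
        simp only [mem_insert, mem_singleton] at hl
        rcases hl with rfl | rfl | rfl <;> simpa

theorem eq_or_eq_of_hammingDist_le_two {i j k : ι} (hfg : hammingDist f g ≤ 2) (hij : i ≠ j)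
    (hik : i ≠ k) (hjk : j ≠ k) (hk : f k ≠ g k) : f i = g i ∨ f j = g j := by
  by_contra! hne
  have := three_le_hammingDist hij hik hjk hne.1 hne.2 hk
  omega

theorem hammingNorm_le_two_of_eq_zero [Zero β] {x y z z' : ι}
    (hsupp : ∀ i, i ≠ x → i ≠ y → i ≠ z → i ≠ z' → f i = 0) (hz : f z = 0) (hz' : f z' = 0) :
    hammingNorm f ≤ 2 := by
  rw [← hammingDist_zero_right]
  refine hammingDist_le_two_of_eq (x := x) (y := y) fun i hx hy => ?_
  by_cases hiz : i = z
  · rw [hiz, hz, Pi.zero_apply]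
  by_cases hiz' : i = z'
  · rw [hiz', hz', Pi.zero_apply]
  exact hsupp i hx hy hiz hiz'

/-- A coordinate where `f` differs from both `g` and `h`, although they agree there, is counted
twice on the right and not at all on the left. -/
theorem hammingDist_add_two_le {i : ι} (hg : f i ≠ g i) (hh : f i ≠ h i) (hgh : g i = h i) :
    hammingDist g h + 2 ≤ hammingDist f g + hammingDist f h := by
  set A : Finset ι := {j | f j ≠ g j}
  set B : Finset ι := {j | f j ≠ h j}
  have hsub : ({j | g j ≠ h j} : Finset ι) ⊆ (A ∪ B).erase i := fun j hj => by
    simp only [mem_filter, mem_univ, true_and] at hj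
    refine mem_erase.mpr ⟨by rintro rfl; exact hj hgh, ?_⟩
    simp only [A, B, mem_union, mem_filter, mem_univ, true_and]
    by_contra! hfj
    exact hj (hfj.1.symm.trans hfj.2)
  have hiAB : i ∈ A ∩ B := by simp [A, B, hg, hh]
  have hunion := card_union_add_card_inter A B
  have hinter := card_pos.mpr ⟨i, hiAB⟩
  have herase := card_erase_add_one (mem_union_left B (mem_inter.mp hiAB).1)
  have := card_le_card hsub
  change #{j | g j ≠ h j} + 2 ≤ #A + #B
  omega

end Hamming

theorem sum_ne_zero_of_hammingNorm_eq_one {ι G : Type*} [Fintype ι] [AddCommGroup G]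
    [DecidableEq G] {η : ι → G} (h : hammingNorm η = 1) :
    ∑ i, η i ≠ 0 := by
  obtain ⟨j, hj⟩ := card_eq_one.mp h
  have hsupp : ∀ i, η i ≠ 0 ↔ i = j := fun i => by
    simpa using congrArg (i ∈ ·) hj
  rw [Fintype.sum_eq_single j fun i hi => not_not.mp (mt (hsupp i).mp hi), hsupp]

section Dipole

variable {ι G : Type*} [DecidableEq ι] [AddCommGroup G]

def dipole (u v : ι) (c : G) : ι → G := Pi.single u c - Pi.single v c

variable {u v i : ι} {c : G}

theorem dipole_apply_left (h : u ≠ v) : dipole u v c u = c := by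
  simp [dipole, h]

theorem dipole_apply_right (h : u ≠ v) : dipole u v c v = -c := by
  simp [dipole, h.symm]

theorem dipole_apply_of_ne (hu : i ≠ u) (hv : i ≠ v) : dipole u v c i = 0 := by
  simp [dipole, hu, hv]

theorem dipole_neg_swap (u v : ι) (c : G) : dipole v u (-c) = dipole u v c := by
  simp only [dipole, Pi.single_neg]
  abel

variable [Fintype ι]

theorem exists_eq_dipole_of_hammingNorm_eq_two {η : ι → G} [DecidableEq G]
    (h : hammingNorm η = 2) (hsum : ∑ i, η i = 0) :
    ∃ c u v, c ≠ 0 ∧ u ≠ v ∧ η = dipole u v c := by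
  obtain ⟨u, v, huv, hst⟩ := card_eq_two.mp h
  have hsupp : ∀ i, η i ≠ 0 ↔ i = u ∨ i = v := fun i => by
    simpa using congrArg (i ∈ ·) hst
  have hoff : ∀ i, i ≠ u → i ≠ v → η i = 0 := fun i hu hv => by
    simpa [hu, hv] using mt (hsupp i).mp
  rw [Fintype.sum_eq_add u v huv fun i hi => hoff i hi.1 hi.2] at hsum
  refine ⟨η u, u, v, (hsupp u).mpr (.inl rfl), huv, funext fun i => ?_⟩
  by_cases hu : i = u
  · rw [hu, dipole_apply_left huv]
  by_cases hv : i = v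
  · rw [hv, dipole_apply_right huv, eq_neg_of_add_eq_zero_right hsum]
  · rw [dipole_apply_of_ne hu hv, hoff i hu hv]

end Dipole

theorem Fintype.sum_eq_add_add {ι M : Type*} [Fintype ι] [DecidableEq ι] [AddCommMonoid M]
    {f : ι → M} {u v w : ι} (huv : u ≠ v) (huw : u ≠ w) (hvw : v ≠ w)
    (h : ∀ i, i ≠ u → i ≠ v → i ≠ w → f i = 0) : ∑ i, f i = f u + f v + f w := by
  rw [← Finset.sum_subset (subset_univ {u, v, w}) fun i _ hi => by simp_all,
    sum_insert (by simp [huv, huw]), sum_pair hvw, add_assoc]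

section AffineRelation

variable {F ι : Type*} [Field F] [AddCommGroup ι] [Module F ι] [Fintype ι]

/-- The weights of an affine dependence among the points of `ι`: `RMs1 F d` is the set of these
for `ι = F^d`. -/
def IsAffineRelation (η : ι → F) : Prop := ∑ i, η i = 0 ∧ ∑ i, η i • i = 0

theorem isAffineRelation_zero : IsAffineRelation (0 : ι → F) := by
  simp [IsAffineRelation]

theorem IsAffineRelation.sub {η₁ η₂ : ι → F} (h₁ : IsAffineRelation η₁)
    (h₂ : IsAffineRelation η₂) : IsAffineRelation (η₁ - η₂) := by
  simp only [IsAffineRelation, Pi.sub_apply, sub_smul, sum_sub_distrib, h₁.1, h₁.2, h₂.1, h₂.2,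
    sub_zero, and_self]

variable [DecidableEq ι] {η η₁ η₂ : ι → F} {u v w : ι} {m : F}

theorem sum_dipole_smul (u v : ι) (c : F) : ∑ i, dipole u v c i • i = c • (u - v) := by
  simp [dipole, sub_smul, sum_sub_distrib, Pi.single_apply, smul_sub]

theorem IsAffineRelation.three_le_hammingNorm [DecidableEq F] (h : IsAffineRelation η)
    (hη : η ≠ 0) : 3 ≤ hammingNorm η := by
  by_contra! hlt
  interval_cases hn : hammingNorm η
  · exact hη (hammingNorm_eq_zero.mp hn)
  · exact sum_ne_zero_of_hammingNorm_eq_one hn h.1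
  · obtain ⟨c, u, v, hc, huv, rfl⟩ := exists_eq_dipole_of_hammingNorm_eq_two hn h.1
    have := h.2
    rw [sum_dipole_smul, smul_eq_zero, sub_eq_zero] at this
    exact this.elim hc huv

theorem IsAffineRelation.add_add_eq_zero (h : IsAffineRelation η) (huv : u ≠ v) (huw : u ≠ w)
    (hvw : v ≠ w) (hsupp : ∀ i, i ≠ u → i ≠ v → i ≠ w → η i = 0) :
    η u + η v + η w = 0 ∧ η u • u + η v • v + η w • w = 0 := by
  refine ⟨?_, ?_⟩
  · rw [← Fintype.sum_eq_add_add huv huw hvw hsupp, h.1]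
  · rw [← h.2, Fintype.sum_eq_add_add huv huw hvw fun i hu hv hw => by
      rw [hsupp i hu hv hw, zero_smul]]

theorem IsAffineRelation.exists_eq_add_smul_sub [DecidableEq F] (h : IsAffineRelation η)
    (hη : η ≠ 0) (huv : u ≠ v) (huw : u ≠ w) (hvw : v ≠ w)
    (hsupp : ∀ i, i ≠ u → i ≠ v → i ≠ w → η i = 0) : ∃ m : F, w = v + m • (u - v) := by
  have hw : η w ≠ 0 := fun hw => by
    have := hammingNorm_le_two_of_eq_zero (fun i hu hv hw _ => hsupp i hu hv hw) hw hw
    have := h.three_le_hammingNorm hη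
    omega
  obtain ⟨hsum, hmom⟩ := h.add_add_eq_zero huv huw hvw hsupp
  have hm : η w * (-η u / η w) = -η u := mul_div_cancel₀ _ hw
  refine ⟨-η u / η w, smul_right_injective ι hw ?_⟩
  linear_combination (norm := module) hmom - hsum • v - hm • (u - v)

theorem IsAffineRelation.apply_eq_of_eq_add_smul_sub (h : IsAffineRelation η) (huv : u ≠ v)
    (huw : u ≠ w) (hvw : v ≠ w) (hw : w = v + m • (u - v))
    (hsupp : ∀ i, i ≠ u → i ≠ v → i ≠ w → η i = 0) :
    η u = -(m * η w) ∧ η v = (m - 1) * η w := by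
  obtain ⟨hsum, hmom⟩ := h.add_add_eq_zero huv huw hvw hsupp
  have hu : (η u + m * η w) • (u - v) = 0 := by
    linear_combination (norm := module) hmom - hsum • v - η w • hw
  rcases smul_eq_zero.mp hu with hu | hu
  · exact ⟨by linear_combination hu, by linear_combination hsum - hu⟩
  · exact absurd (sub_eq_zero.mp hu) huv

theorem IsAffineRelation.eq_of_apply_eq (h₁ : IsAffineRelation η₁) (h₂ : IsAffineRelation η₂)
    (huv : u ≠ v) (huw : u ≠ w) (hvw : v ≠ w) (hw : w = v + m • (u - v))
    (hsupp₁ : ∀ i, i ≠ u → i ≠ v → i ≠ w → η₁ i = 0)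
    (hsupp₂ : ∀ i, i ≠ u → i ≠ v → i ≠ w → η₂ i = 0) (heq : η₁ w = η₂ w) : η₁ = η₂ := by
  obtain ⟨hu₁, hv₁⟩ := h₁.apply_eq_of_eq_add_smul_sub huv huw hvw hw hsupp₁
  obtain ⟨hu₂, hv₂⟩ := h₂.apply_eq_of_eq_add_smul_sub huv huw hvw hw hsupp₂
  funext i
  by_cases hu : i = u
  · rw [hu, hu₁, hu₂, heq]
  by_cases hv : i = v
  · rw [hv, hv₁, hv₂, heq]
  by_cases hw : i = w
  · rw [hw, heq]
  rw [hsupp₁ i hu hv hw, hsupp₂ i hu hv hw]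

end AffineRelation

/-- The two values `z` are `-a / m` and `-a / (m - 1)`; the first must be `c`, which forces the
second to be `c / m`, and comparing gives `m ^ 2 - m + 1 = 0`. -/
theorem sq_eq_sub_one_of_ne {F : Type*} [Field F] {m a c z₁ z₂ : F} (ha : a ≠ 0)
    (hca : c ≠ -a) (hz : z₁ ≠ z₂)
    (h₁ : (-(m * z₁) = a ∨ (m - 1) * z₁ = -a) ∧ (z₁ = c ∨ -(m * z₁) = -c))
    (h₂ : (-(m * z₂) = a ∨ (m - 1) * z₂ = -a) ∧ (z₂ = c ∨ -(m * z₂) = -c)) :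
    m ^ 2 = m - 1 ∧ c = (m - 1) * a := by
  grind

section MutualRelation

variable {F ι : Type*} [Field F] [AddCommGroup ι] [Module F ι] [Fintype ι] [DecidableEq F]

/-- `δ = β - α` for a codeword `β ≠ α` at distance `2` from both `α + D` and `α + D'`. -/
structure IsMutualRelation (D D' δ : ι → F) : Prop where
  isAffineRelation : IsAffineRelation δ
  ne_zero : δ ≠ 0
  hammingDist_left : hammingDist δ D = 2
  hammingDist_right : hammingDist δ D' = 2

variable {D D' δ δ₁ δ₂ : ι → F} {a b c m : F} {u v w p r : ι}

theorem IsMutualRelation.symm (h : IsMutualRelation D D' δ) : IsMutualRelation D' D δ :=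
  ⟨h.isAffineRelation, h.ne_zero, h.hammingDist_right, h.hammingDist_left⟩

variable [DecidableEq ι]

theorem IsMutualRelation.apply_eq_zero (h : IsMutualRelation D D' δ)
    (hD : 3 ≤ hammingDist D D') {i : ι} (hi : D i = 0) (hi' : D' i = 0) : δ i = 0 := by
  by_contra hδ
  have := hammingDist_add_two_le (f := δ) (by rwa [hi]) (by rwa [hi']) (hi.trans hi'.symm)
  rw [h.hammingDist_left, h.hammingDist_right] at this
  omega

theorem IsMutualRelation.apply_left_of_disjoint_of_apply_eq_zero (ha : a ≠ 0) (hb : b ≠ 0)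
    (huv : u ≠ v) (hpr : p ≠ r) (hpu : p ≠ u) (hpv : p ≠ v) (hru : r ≠ u) (hrv : r ≠ v)
    (h : IsMutualRelation (dipole u v a) (dipole p r b) δ)
    (hD : 3 ≤ hammingDist (dipole u v a) (dipole p r b)) (hp : δ p = 0) : δ u = a := by
  have hsupp : ∀ i, i ≠ u → i ≠ v → i ≠ p → i ≠ r → δ i = 0 := fun i hu hv hp hr =>
    h.apply_eq_zero hD (dipole_apply_of_ne hu hv) (dipole_apply_of_ne hp hr)
  have h3 := h.isAffineRelation.three_le_hammingNorm h.ne_zero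
  by_contra hu
  have hr : δ r ≠ 0 := fun hr => by
    have := hammingNorm_le_two_of_eq_zero hsupp hp hr
    omega
  have hv : δ v = -a := by
    refine ((eq_or_eq_of_hammingDist_le_two h.hammingDist_left.le huv hru.symm hrv.symm
      (by rwa [dipole_apply_of_ne hru hrv])).resolve_left ?_).trans (dipole_apply_right huv)
    rwa [dipole_apply_left huv]
  have hu0 : δ u ≠ 0 := fun hu0 => by
    have := hammingNorm_le_two_of_eq_zero (fun i hv hr hu hp => hsupp i hu hv hp hr) hu0 hp
    omega
  have := three_le_hammingDist (f := δ) (g := dipole p r b) huv hpu.symm hpv.symm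
    (by rwa [dipole_apply_of_ne hpu.symm hru.symm])
    (by rw [hv, dipole_apply_of_ne hpv.symm hrv.symm]; exact neg_ne_zero.mpr ha)
    (by rw [hp, dipole_apply_left hpr]; exact hb.symm)
  rw [h.hammingDist_right] at this
  omega

theorem IsMutualRelation.apply_left_of_disjoint (ha : a ≠ 0) (hb : b ≠ 0)
    (huv : u ≠ v) (hpr : p ≠ r) (hpu : p ≠ u) (hpv : p ≠ v) (hru : r ≠ u) (hrv : r ≠ v)
    (h : IsMutualRelation (dipole u v a) (dipole p r b) δ)
    (hD : 3 ≤ hammingDist (dipole u v a) (dipole p r b)) : δ u = a := by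
  by_cases hp : δ p = 0
  · exact h.apply_left_of_disjoint_of_apply_eq_zero ha hb huv hpr hpu hpv hru hrv hD hp
  by_cases hr : δ r = 0
  · rw [← dipole_neg_swap p r] at h hD
    exact h.apply_left_of_disjoint_of_apply_eq_zero ha (neg_ne_zero.mpr hb) huv hpr.symm hru hrv
      hpu hpv hD hr
  refine ((eq_or_eq_of_hammingDist_le_two h.hammingDist_left.le hpu.symm hru.symm hpr
    (by rwa [dipole_apply_of_ne hru hrv])).resolve_right
    (by rwa [dipole_apply_of_ne hpu hpv])).trans (dipole_apply_left huv)

theorem IsMutualRelation.eq_add_of_disjoint (ha : a ≠ 0) (hb : b ≠ 0)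
    (huv : u ≠ v) (hpr : p ≠ r) (hpu : p ≠ u) (hpv : p ≠ v) (hru : r ≠ u) (hrv : r ≠ v)
    (h : IsMutualRelation (dipole u v a) (dipole p r b) δ)
    (hD : 3 ≤ hammingDist (dipole u v a) (dipole p r b)) :
    δ = dipole u v a + dipole p r b := by
  have hsymm := hammingDist_comm (dipole u v a) (dipole p r b) ▸ hD
  have hu := h.apply_left_of_disjoint ha hb huv hpr hpu hpv hru hrv hD
  have hp := h.symm.apply_left_of_disjoint hb ha hpr huv hpu.symm hru.symm hpv.symm hrv.symm hsymm
  rw [← dipole_neg_swap u v, ← dipole_neg_swap p r] at h hD hsymm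
  have hv := h.apply_left_of_disjoint (neg_ne_zero.mpr ha) (neg_ne_zero.mpr hb) huv.symm hpr.symm
    hrv hru hpv hpu hD
  have hr := h.symm.apply_left_of_disjoint (neg_ne_zero.mpr hb) (neg_ne_zero.mpr ha) hpr.symm
    huv.symm hrv.symm hpv.symm hru.symm hpu.symm hsymm
  funext i
  have hsupp : i ≠ u → i ≠ v → i ≠ p → i ≠ r → δ i = 0 := fun hu hv hp hr =>
    h.apply_eq_zero hD (dipole_apply_of_ne hv hu) (dipole_apply_of_ne hr hp)
  rw [Pi.add_apply]
  by_cases hiu : i = u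
  · subst hiu; rw [hu, dipole_apply_left huv, dipole_apply_of_ne hpu.symm hru.symm, add_zero]
  by_cases hiv : i = v
  · subst hiv; rw [hv, dipole_apply_right huv, dipole_apply_of_ne hpv.symm hrv.symm, add_zero]
  by_cases hip : i = p
  · subst hip; rw [hp, dipole_apply_left hpr, dipole_apply_of_ne hpu hpv, zero_add]
  by_cases hir : i = r
  · subst hir; rw [hr, dipole_apply_right hpr, dipole_apply_of_ne hru hrv, zero_add]
  rw [hsupp hiu hiv hip hir, dipole_apply_of_ne hiu hiv, dipole_apply_of_ne hip hir, add_zero]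

theorem IsMutualRelation.apply_of_shared (h : IsMutualRelation (dipole u v a) (dipole w u c) δ)
    (hD : 3 ≤ hammingDist (dipole u v a) (dipole w u c)) (huv : u ≠ v) (hwu : w ≠ u)
    (hwv : w ≠ v) (hw : w = v + m • (u - v)) :
    (-(m * δ w) = a ∨ (m - 1) * δ w = -a) ∧ (δ w = c ∨ -(m * δ w) = -c) := by
  have hsupp : ∀ i, i ≠ u → i ≠ v → i ≠ w → δ i = 0 := fun i hu hv hw =>
    h.apply_eq_zero hD (dipole_apply_of_ne hu hv) (dipole_apply_of_ne hw hu)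
  obtain ⟨hu, hv⟩ := h.isAffineRelation.apply_eq_of_eq_add_smul_sub huv hwu.symm hwv.symm hw hsupp
  have hδw : δ w ≠ 0 := fun hδw => h.ne_zero <|
    h.isAffineRelation.eq_of_apply_eq isAffineRelation_zero huv hwu.symm hwv.symm hw hsupp
      (fun _ _ _ _ => rfl) hδw
  have hm : m - 1 ≠ 0 := fun hm => hwu (by rw [hw, sub_eq_zero.mp hm, one_smul, add_sub_cancel])
  constructor
  · have := eq_or_eq_of_hammingDist_le_two h.hammingDist_left.le huv hwu.symm hwv.symm
      (by rwa [dipole_apply_of_ne hwu hwv])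
    rwa [dipole_apply_left huv, dipole_apply_right huv, hu, hv] at this
  · have := eq_or_eq_of_hammingDist_le_two h.hammingDist_right.le hwu hwv huv
      (by rw [hv, dipole_apply_of_ne hwv.symm huv.symm]; exact mul_ne_zero hm hδw)
    rwa [dipole_apply_left hwu, dipole_apply_right hwu, hu] at this

theorem IsMutualRelation.exists_of_shared
    (h₁ : IsMutualRelation (dipole u v a) (dipole w u c) δ₁)
    (h₂ : IsMutualRelation (dipole u v a) (dipole w u c) δ₂) (hne : δ₁ ≠ δ₂)
    (hD : 3 ≤ hammingDist (dipole u v a) (dipole w u c)) (ha : a ≠ 0) (huv : u ≠ v)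
    (hwu : w ≠ u) (hwv : w ≠ v) :
    ∃ m : F, m ^ 2 = m - 1 ∧ w = v + m • (u - v) ∧ c = (m - 1) * a := by
  have hsupp : ∀ δ, IsMutualRelation (dipole u v a) (dipole w u c) δ →
      ∀ i, i ≠ u → i ≠ v → i ≠ w → δ i = 0 := fun δ h i hu hv hw =>
    h.apply_eq_zero hD (dipole_apply_of_ne hu hv) (dipole_apply_of_ne hw hu)
  obtain ⟨m, hw⟩ := h₁.isAffineRelation.exists_eq_add_smul_sub h₁.ne_zero huv hwu.symm hwv.symm
    (hsupp δ₁ h₁)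
  have hca : c ≠ -a := fun hca => by
    have := hammingDist_le_two_of_eq (f := dipole u v a) (g := dipole w u c) (x := v) (y := w)
      fun i hv hw => by
        by_cases hu : i = u
        · rw [hu, dipole_apply_left huv, dipole_apply_right hwu, hca, neg_neg]
        · rw [dipole_apply_of_ne hu hv, dipole_apply_of_ne hw hu]
    omega
  have hδw : δ₁ w ≠ δ₂ w := fun hδw => hne <|
    h₁.isAffineRelation.eq_of_apply_eq h₂.isAffineRelation huv hwu.symm hwv.symm hw
      (hsupp δ₁ h₁) (hsupp δ₂ h₂) hδw
  obtain ⟨hm, hc⟩ := sq_eq_sub_one_of_ne ha hca hδw (h₁.apply_of_shared hD huv hwu hwv hw)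
    (h₂.apply_of_shared hD huv hwu hwv hw)
  exact ⟨m, hm, hw, hc⟩

theorem IsMutualRelation.exists_sq_eq_sub_one
    (h₁ : IsMutualRelation (dipole u v a) (dipole p r b) δ₁)
    (h₂ : IsMutualRelation (dipole u v a) (dipole p r b) δ₂) (hne : δ₁ ≠ δ₂)
    (hD : 3 ≤ hammingDist (dipole u v a) (dipole p r b)) (ha : a ≠ 0) (hb : b ≠ 0)
    (huv : u ≠ v) (hpr : p ≠ r) :
    ∃ m : F, m ^ 2 = m - 1 ∧ (dipole p r b = dipole (v + m • (u - v)) u ((m - 1) * a) ∨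
      dipole p r b = dipole (v + m • (u - v)) v (m * a)) := by
  obtain ⟨w, c, hwu, hwv, hD' | hD'⟩ : ∃ w c, w ≠ u ∧ w ≠ v ∧
      (dipole p r b = dipole w u c ∨ dipole p r b = dipole w v c) := by
    by_cases hp : p = u ∨ p = v <;> by_cases hr : r = u ∨ r = v
    · have := hammingDist_le_two_of_eq (f := dipole u v a) (g := dipole p r b) (x := u) (y := v)
        fun i hu hv => by
          rw [dipole_apply_of_ne hu hv, dipole_apply_of_ne (by rcases hp with rfl | rfl <;>
            assumption) (by rcases hr with rfl | rfl <;> assumption)]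
      omega
    · obtain ⟨hru, hrv⟩ := not_or.mp hr
      rcases hp with rfl | rfl
      · exact ⟨r, -b, hru, hrv, .inl (dipole_neg_swap p r b).symm⟩
      · exact ⟨r, -b, hru, hrv, .inr (dipole_neg_swap p r b).symm⟩
    · obtain ⟨hpu, hpv⟩ := not_or.mp hp
      rcases hr with rfl | rfl
      · exact ⟨p, b, hpu, hpv, .inl rfl⟩
      · exact ⟨p, b, hpu, hpv, .inr rfl⟩
    · obtain ⟨hpu, hpv⟩ := not_or.mp hp
      obtain ⟨hru, hrv⟩ := not_or.mp hr
      exact absurd ((h₁.eq_add_of_disjoint ha hb huv hpr hpu hpv hru hrv hD).trans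
        (h₂.eq_add_of_disjoint ha hb huv hpr hpu hpv hru hrv hD).symm) hne
  · rw [hD'] at h₁ h₂ hD ⊢
    obtain ⟨m, hm, hw, hc⟩ := h₁.exists_of_shared h₂ hne hD ha huv hwu hwv
    exact ⟨m, hm, .inl (by rw [← hw, hc])⟩
  · -- the same situation with `u, v, a` replaced by `v, u, -a`, and `m` by `1 - m`
    rw [hD', ← dipole_neg_swap u v a] at h₁ h₂ hD
    obtain ⟨m, hm, hw, hc⟩ := h₁.exists_of_shared h₂ hne hD (neg_ne_zero.mpr ha) huv.symm hwv hwu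
    refine ⟨1 - m, by linear_combination hm, .inr ?_⟩
    rw [hD', hc, hw]
    congr 1
    · module
    · ring

end MutualRelation

section Code

variable {ι G : Type*} [Fintype ι] [AddCommGroup G] [DecidableEq G]

theorem hammingNorm_single [DecidableEq ι] (i : ι) {c : G} (hc : c ≠ 0) :
    hammingNorm (Pi.single i c : ι → G) = 1 := by
  simp [hammingNorm, Pi.single_apply, hc, filter_eq']

theorem hammingDist_ne_one_of_sum_eq_zero {β γ : ι → G} (hβ : ∑ i, β i = 0)
    (hγ : ∑ i, γ i = 0) : hammingDist β γ ≠ 1 := fun h => by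
  rw [hammingDist_eq_hammingNorm] at h
  exact sum_ne_zero_of_hammingNorm_eq_one h (by simp [sum_add_distrib, hβ, hγ])

/-- Subtracting the entry sum of `x β` at one coordinate gives a sum-zero vertex `μ` adjacent to
`x β`. Then `x⁻¹ μ` is adjacent to `β ∈ C`, so lies in `C₁`, hence so does `μ`; but a sum-zero
vertex cannot be adjacent to a codeword. -/
theorem sum_apply_eq_zero_of_mem_image [Nonempty ι] [DecidableEq ι] {C : Set (ι → G)}
    (hC : ∀ γ ∈ C, ∑ i, γ i = 0) {x : (ι → G) ≃ (ι → G)} (hx : IsAut x)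
    (hx₁ : x '' neighbourSet C = neighbourSet C) {β : ι → G} (hβ : β ∈ C) :
    ∑ i, x β i = 0 := by
  by_contra hσ
  obtain ⟨i₀⟩ := ‹Nonempty ι›
  set μ := x β - Pi.single i₀ (∑ i, x β i)
  have hμ : ∑ i, μ i = 0 := by simp [μ, sum_sub_distrib]
  have hβμ : hammingDist β (x.symm μ) = 1 := by
    rw [← hx, Equiv.apply_symm_apply, hammingDist_comm, hammingDist_eq_hammingNorm, neg_sub,
      sub_add_cancel, hammingNorm_single i₀ hσ]
  have hμC₁ : x.symm μ ∈ neighbourSet C :=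
    ⟨fun hμC => hammingDist_ne_one_of_sum_eq_zero (hC β hβ) (hC _ hμC) hβμ,
      β, hβ, by rw [hammingDist_comm, hβμ]⟩
  obtain ⟨-, γ, hγ, hμγ⟩ : μ ∈ neighbourSet C := hx₁ ▸ ⟨_, hμC₁, x.apply_symm_apply μ⟩
  exact hammingDist_ne_one_of_sum_eq_zero hμ (hC γ hγ) hμγ

end Code

theorem ncard_le_two_mul_card_of_forall_exists {α β : Type*} [DecidableEq α] {W : Set α}
    {R : Finset β} (g₁ g₂ : β → α) (h : ∀ x ∈ W, ∃ m ∈ R, x = g₁ m ∨ x = g₂ m) :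
    W.ncard ≤ 2 * #R := by
  have hW : W ⊆ ↑(R.image g₁ ∪ R.image g₂) := fun x hx => by
    obtain ⟨m, hm, rfl | rfl⟩ := h x hx
    · exact mem_union_left _ (mem_image_of_mem g₁ hm)
    · exact mem_union_right _ (mem_image_of_mem g₂ hm)
  calc W.ncard ≤ #(R.image g₁ ∪ R.image g₂) := by
        rw [← Set.ncard_coe_finset]; exact Set.ncard_le_ncard hW (Finset.finite_toSet _)
    _ ≤ #(R.image g₁) + #(R.image g₂) := card_union_le _ _
    _ ≤ #R + #R := add_le_add card_image_le card_image_le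
    _ = 2 * #R := (two_mul _).symm

theorem Set.exists_ne_ne_of_ncard_eq_three {α : Type*} {S : Set α} {a : α} (hS : S.ncard = 3)
    (ha : a ∈ S) : ∃ b₁ ∈ S, ∃ b₂ ∈ S, b₁ ≠ b₂ ∧ b₁ ≠ a ∧ b₂ ≠ a := by
  have : (S \ {a}).ncard = 2 := by rw [Set.ncard_sdiff_singleton_of_mem ha, hS]
  obtain ⟨b₁, b₂, hb, hS'⟩ := Set.ncard_eq_two.mp this
  have h₁ : b₁ ∈ S \ {a} := hS' ▸ Set.mem_insert _ _
  have h₂ : b₂ ∈ S \ {a} := hS' ▸ Set.mem_insert_of_mem _ rfl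
  exact ⟨b₁, h₁.1, b₂, h₂.1, hb, h₁.2, h₂.2⟩

section FiniteField

variable {F : Type*} [Field F] [Fintype F]

theorem three_eq_zero_iff_three_dvd_card : (3 : F) = 0 ↔ 3 ∣ Fintype.card F := by
  have := Nat.fact_prime_three
  have hp := CharP.char_is_prime F (ringChar F)
  rw [← prime_dvd_char_iff_dvd_card 3, ← Nat.cast_ofNat, ringChar.spec,
    Nat.prime_dvd_prime_iff_eq hp Nat.prime_three, Nat.prime_dvd_prime_iff_eq Nat.prime_three hp,
    eq_comm]

variable [DecidableEq F]

theorem card_filter_sq_eq_sub_one_le_two : #{m : F | m ^ 2 = m - 1} ≤ 2 := by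
  obtain h | ⟨m₀, hm₀⟩ := Finset.eq_empty_or_nonempty ({m : F | m ^ 2 = m - 1} : Finset F)
  · simp [h]
  calc _ ≤ #{m₀, 1 - m₀} := card_le_card fun m hm => by
        simp only [mem_filter, mem_univ, true_and] at hm hm₀
        have : (m - m₀) * (m - (1 - m₀)) = 0 := by linear_combination hm - hm₀
        rcases mul_eq_zero.mp this with h | h <;> simp [sub_eq_zero.mp h]
    _ ≤ 2 := card_le_two

theorem card_filter_sq_eq_sub_one_le_one (h3 : (3 : F) = 0) :
    #{m : F | m ^ 2 = m - 1} ≤ 1 := by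
  have hroot : ∀ m : F, m ^ 2 = m - 1 → m = -1 := fun m hm => by
    have : (m + 1) ^ 2 = 0 := by linear_combination hm + m * h3
    exact eq_neg_of_add_eq_zero_left (pow_eq_zero_iff two_ne_zero |>.mp this)
  refine card_le_one.mpr fun m hm m' hm' => ?_
  simp only [mem_filter, mem_univ, true_and] at hm hm'
  rw [hroot m hm, hroot m' hm']

/-- A root `m` makes `-m` a cube root of unity other than `1`, so `3 ∣ q - 1`. -/
theorem sq_ne_sub_one_of_card_mod_three_eq_two (hq : Fintype.card F % 3 = 2) (m : F) :
    m ^ 2 ≠ m - 1 := fun hm => by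
  have hm0 : -m ≠ 0 := fun hm0 => by
    rw [neg_eq_zero.mp hm0] at hm
    norm_num at hm
  have h3 : (3 : F) ≠ 0 := fun h3 => by
    have := three_eq_zero_iff_three_dvd_card.mp h3
    omega
  have hμ3 : Units.mk0 (-m) hm0 ^ 3 = 1 := Units.ext <| by
    simp only [Units.val_pow_eq_pow_val, Units.val_mk0, Units.val_one]
    linear_combination (-(m + 1)) * hm
  have hμ1 : Units.mk0 (-m) hm0 ≠ 1 := fun h => h3 <| by
    have hm1 : m = -1 := by simpa [neg_eq_iff_eq_neg] using congrArg Units.val h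
    rw [hm1] at hm
    linear_combination hm
  have := orderOf_eq_prime hμ3 hμ1 ▸ orderOf_dvd_card (x := Units.mk0 (-m) hm0)
  rw [Fintype.card_units] at this
  have := Fintype.card_pos (α := F)
  omega

end FiniteField

theorem hammingDist_add_add_left {ι G : Type*} [Fintype ι] [AddCommGroup G] [DecidableEq G]
    (α D D' : ι → G) : hammingDist (α + D) (α + D') = hammingDist D D' := by
  rw [hammingDist_eq_hammingNorm, hammingDist_eq_hammingNorm]
  congr 1
  abel

section ReedMuller

variable {F : Type} [Field F] [Fintype F] [DecidableEq F] {d : ℕ} {α π π' : (Fin d → F) → F}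
  {x : ((Fin d → F) → F) ≃ ((Fin d → F) → F)}

theorem IsElusiveTriple.sum_apply_eq_zero (hET : IsElusiveTriple (RMs1 F d) α x)
    (hπ : π ∈ x '' RMs1 F d) : ∑ v, π v = 0 := by
  obtain ⟨β, hβ, rfl⟩ := hπ
  exact sum_apply_eq_zero_of_mem_image (fun γ hγ => hγ.1) hET.1 hET.2.1 hβ

theorem IsAssociate.exists_eq_add_dipole (hET : IsElusiveTriple (RMs1 F d) α x)
    (hπ : IsAssociate (RMs1 F d) α x π) : ∃ a u v, a ≠ 0 ∧ u ≠ v ∧ π = α + dipole u v a := by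
  have h2 : hammingNorm (-α + π) = 2 := by rw [← hammingDist_eq_hammingNorm]; exact hπ.1
  have hsum : ∑ v, (-α + π) v = 0 := by
    simp [sum_add_distrib, hET.2.2.1.1, hET.sum_apply_eq_zero hπ.2]
  obtain ⟨a, u, v, ha, huv, h⟩ := exists_eq_dipole_of_hammingNorm_eq_two h2 hsum
  exact ⟨a, u, v, ha, huv, by rw [← h, add_neg_cancel_left]⟩

theorem IsAssociate.three_le_hammingDist (hET : IsElusiveTriple (RMs1 F d) α x)
    (hπ : IsAssociate (RMs1 F d) α x π) (hπ' : IsAssociate (RMs1 F d) α x π') (hne : π ≠ π') :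
    3 ≤ hammingDist π π' := by
  obtain ⟨β, hβ, rfl⟩ := hπ.2
  obtain ⟨β', hβ', rfl⟩ := hπ'.2
  rw [hET.1, hammingDist_eq_hammingNorm, neg_add_eq_sub]
  exact IsAffineRelation.three_le_hammingNorm (IsAffineRelation.sub hβ' hβ)
    (sub_ne_zero.mpr fun h => hne (congrArg x h.symm))

theorem IsAssociate.exists_sq_eq_sub_one (hET : IsElusiveTriple (RMs1 F d) α x) {a : F}
    {u v : Fin d → F} (ha : a ≠ 0) (huv : u ≠ v)
    (hπ : IsAssociate (RMs1 F d) α x (α + dipole u v a))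
    (hπ' : IsAssociate (RMs1 F d) α x π') (hne : π' ≠ α + dipole u v a)
    (hMC : MC (RMs1 F d) (α + dipole u v a) π' = 3) :
    ∃ m : F, m ^ 2 = m - 1 ∧ (π' = α + dipole (v + m • (u - v)) u ((m - 1) * a) ∨
      π' = α + dipole (v + m • (u - v)) v (m * a)) := by
  obtain ⟨b, p, r, hb, hpr, rfl⟩ := hπ'.exists_eq_add_dipole hET
  have hD : 3 ≤ hammingDist (dipole u v a) (dipole p r b) := by
    rw [← hammingDist_add_add_left α]
    exact hπ.three_le_hammingDist hET hπ' hne.symm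
  have hmut : ∀ β ∈ RMs1 F d ∩ GammaSet (α + dipole u v a) 2 ∩ GammaSet (α + dipole p r b) 2,
      β ≠ α → IsMutualRelation (dipole u v a) (dipole p r b) (β - α) :=
    fun β ⟨⟨hβ, hβπ⟩, hβπ'⟩ hβα => by
      refine ⟨IsAffineRelation.sub hβ hET.2.2.1, sub_ne_zero.mpr hβα, ?_, ?_⟩
      · rw [hammingDist_comm, ← hammingDist_add_add_left α, add_sub_cancel]; exact hβπ
      · rw [hammingDist_comm, ← hammingDist_add_add_left α, add_sub_cancel]; exact hβπ'
  have hα : α ∈ RMs1 F d ∩ GammaSet (α + dipole u v a) 2 ∩ GammaSet (α + dipole p r b) 2 :=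
    ⟨⟨hET.2.2.1, (hammingDist_comm _ _).trans hπ.1⟩, (hammingDist_comm _ _).trans hπ'.1⟩
  obtain ⟨β₁, hβ₁, β₂, hβ₂, hβ₁₂, hβ₁α, hβ₂α⟩ := Set.exists_ne_ne_of_ncard_eq_three hMC hα
  obtain ⟨m, hm, hD'⟩ := (hmut β₁ hβ₁ hβ₁α).exists_sq_eq_sub_one (hmut β₂ hβ₂ hβ₂α)
    (sub_left_injective.ne hβ₁₂) hD ha hb huv hpr
  exact ⟨m, hm, hD'.imp (congrArg (α + ·)) (congrArg (α + ·))⟩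

end ReedMuller

theorem stmt_19_general (F : Type) [Field F] [Fintype F] [DecidableEq F] (d : ℕ)
    (α : (Fin d → F) → F) (x : ((Fin d → F) → F) ≃ ((Fin d → F) → F))
    (hET : IsElusiveTriple (RMs1 F d) α x)
    (π : (Fin d → F) → F) (hπ : IsAssociate (RMs1 F d) α x π) :
    (Fintype.card F % 3 = 0 →
      {π' : (Fin d → F) → F | IsAssociate (RMs1 F d) α x π' ∧ π' ≠ π ∧
        MC (RMs1 F d) π π' = 3}.ncard ≤ 2) ∧
    (Fintype.card F % 3 = 1 →
      {π' : (Fin d → F) → F | IsAssociate (RMs1 F d) α x π' ∧ π' ≠ π ∧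
        MC (RMs1 F d) π π' = 3}.ncard ≤ 4) ∧
    (Fintype.card F % 3 = 2 →
      ¬ ∃ π' : (Fin d → F) → F, IsAssociate (RMs1 F d) α x π' ∧ π' ≠ π ∧
        MC (RMs1 F d) π π' = 3) := by
  obtain ⟨a, u, v, ha, huv, rfl⟩ := hπ.exists_eq_add_dipole hET
  have hcount := ncard_le_two_mul_card_of_forall_exists (R := {m : F | m ^ 2 = m - 1})
    (W := {π' | IsAssociate (RMs1 F d) α x π' ∧ π' ≠ α + dipole u v a ∧
      MC (RMs1 F d) (α + dipole u v a) π' = 3})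
    (fun m => α + dipole (v + m • (u - v)) u ((m - 1) * a))
    (fun m => α + dipole (v + m • (u - v)) v (m * a)) fun π' ⟨hπ', hne, hMC⟩ => by
      obtain ⟨m, hm, h⟩ := hπ.exists_sq_eq_sub_one hET ha huv hπ' hne hMC
      exact ⟨m, mem_filter.mpr ⟨mem_univ m, hm⟩, h⟩
  refine ⟨fun hq => ?_, fun _ => ?_, fun hq ⟨π', hπ', hne, hMC⟩ => ?_⟩
  · have := card_filter_sq_eq_sub_one_le_one
      (three_eq_zero_iff_three_dvd_card.mpr (Nat.dvd_of_mod_eq_zero hq))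
    omega
  · have := card_filter_sq_eq_sub_one_le_two (F := F)
    omega
  · obtain ⟨m, hm, -⟩ := hπ.exists_sq_eq_sub_one hET ha huv hπ' hne hMC
    exact sq_ne_sub_one_of_card_mod_three_eq_two hq m hm

/-- For `C = RM_q(s-1,d)`, an elusive triple `(C,α,x)` and associate `π`:
if `q ≡ 0 (mod 3)` there are at most two associates `π' ≠ π` with `MC(π,π') = 3`;
if `q ≡ 1 (mod 3)` there are at most four; and if `q ≡ 2 (mod 3)` there are none. -/
theorem stmt_19 (F : Type) [Field F] [Fintype F] [DecidableEq F] (d : ℕ) (hd : 1 ≤ d)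
    (hdq : (d, Fintype.card F) ≠ (1, 2))
    (α : (Fin d → F) → F) (x : ((Fin d → F) → F) ≃ ((Fin d → F) → F))
    (hET : IsElusiveTriple (RMs1 F d) α x)
    (π : (Fin d → F) → F) (hπ : IsAssociate (RMs1 F d) α x π) :
    (Fintype.card F % 3 = 0 →
      {π' : (Fin d → F) → F | IsAssociate (RMs1 F d) α x π' ∧ π' ≠ π ∧
        MC (RMs1 F d) π π' = 3}.ncard ≤ 2) ∧
    (Fintype.card F % 3 = 1 →
      {π' : (Fin d → F) → F | IsAssociate (RMs1 F d) α x π' ∧ π' ≠ π ∧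
        MC (RMs1 F d) π π' = 3}.ncard ≤ 4) ∧
    (Fintype.card F % 3 = 2 →
      ¬ ∃ π' : (Fin d → F) → F, IsAssociate (RMs1 F d) α x π' ∧ π' ≠ π ∧
        MC (RMs1 F d) π π' = 3) :=
  stmt_19_general F d α x hET π hπ
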